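/- arXiv:2301.07876 — 2 statements merged into one kernel-verified Lean document; each statement's English description precedes it below -/
import Mathlib

section
/- Let (A★,B★) satisfy Assumption (LQR) and Assumption (bound), let P★ be a positive-definite matrix satisfying P★ = 𝓡_{A★,B★}(P★), and let (Â,B̂) satisfy ‖Â − A★‖ ≤ ε_m and ‖B̂ − B★‖ ≤ ε_m for some ε_m ≥ 0. Let F ⪰ 0 satisfy ‖F − P★‖ ≤ ε with Υ★ ≥ ε, and set K := 𝓚_{Â,B̂}(F) and K★ := 𝓚_{A★,B★}(P★). Then ‖K − K★‖ ≤ Υ★² (√‖P★‖ + 1)(3ε_m + 4ε)/σ_min(R). -/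
open Matrix

/-- Spectral norm (operator 2-norm) of a real matrix. -/
noncomputable def spNorm {p q : ℕ} (M : Matrix (Fin p) (Fin q) ℝ) : ℝ :=
  ‖LinearMap.toContinuousLinearMap (Matrix.toEuclideanLin M)‖

/-- The spectral radius of a real square matrix is `< 1`. -/
def StabMat {n : ℕ} (M : Matrix (Fin n) (Fin n) ℝ) : Prop :=
  ∀ μ ∈ spectrum ℂ (M.map (algebraMap ℝ ℂ)), ‖μ‖ < 1

/-- `(A, B)` is stabilizable. -/
def Stabilizable {n m : ℕ} (A : Matrix (Fin n) (Fin n) ℝ)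
    (B : Matrix (Fin n) (Fin m) ℝ) : Prop :=
  ∃ K : Matrix (Fin m) (Fin n) ℝ, StabMat (A - B * K)

/-- Smallest (real) eigenvalue: `σ_min` for symmetric matrices. -/
noncomputable def minEig {k : ℕ} (M : Matrix (Fin k) (Fin k) ℝ) : ℝ :=
  sInf (spectrum ℝ M)

/-- Largest (real) eigenvalue: `σ_max` for symmetric matrices. -/
noncomputable def maxEig {k : ℕ} (M : Matrix (Fin k) (Fin k) ℝ) : ℝ :=
  sSup (spectrum ℝ M)

/-- `S_B = B R⁻¹ Bᵀ`. -/
noncomputable def sMat {n m : ℕ} (R : Matrix (Fin m) (Fin m) ℝ)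
    (B : Matrix (Fin n) (Fin m) ℝ) : Matrix (Fin n) (Fin n) ℝ :=
  B * R⁻¹ * Bᵀ

/-- Riccati map `𝓡_{A,B}(P) = Aᵀ P (I + S_B P)⁻¹ A + Q`. -/
noncomputable def ric {n m : ℕ} (R : Matrix (Fin m) (Fin m) ℝ)
    (Q A : Matrix (Fin n) (Fin n) ℝ) (B : Matrix (Fin n) (Fin m) ℝ)
    (P : Matrix (Fin n) (Fin n) ℝ) : Matrix (Fin n) (Fin n) ℝ :=
  Aᵀ * P * (1 + sMat R B * P)⁻¹ * A + Q

/-- Riccati iterates: `𝓡^{(0)} = id`, `𝓡^{(i+1)} = 𝓡 ∘ 𝓡^{(i)}`. -/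
noncomputable def ricIter {n m : ℕ} (R : Matrix (Fin m) (Fin m) ℝ)
    (Q A : Matrix (Fin n) (Fin n) ℝ) (B : Matrix (Fin n) (Fin m) ℝ) :
    ℕ → Matrix (Fin n) (Fin n) ℝ → Matrix (Fin n) (Fin n) ℝ
  | 0, P => P
  | i + 1, P => ric R Q A B (ricIter R Q A B i P)

/-- Gain `𝓚_{A,B}(P) = (R + Bᵀ P B)⁻¹ Bᵀ P A`. -/
noncomputable def gain {n m : ℕ} (R : Matrix (Fin m) (Fin m) ℝ)
    (A : Matrix (Fin n) (Fin n) ℝ) (B : Matrix (Fin n) (Fin m) ℝ)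
    (P : Matrix (Fin n) (Fin n) ℝ) : Matrix (Fin m) (Fin n) ℝ :=
  (R + Bᵀ * P * B)⁻¹ * (Bᵀ * P * A)

/-- Closed loop matrix `𝓛_{A,B}(P) = (I + S_B P)⁻¹ A`. -/
noncomputable def clMat {n m : ℕ} (R : Matrix (Fin m) (Fin m) ℝ)
    (A : Matrix (Fin n) (Fin n) ℝ) (B : Matrix (Fin n) (Fin m) ℝ)
    (P : Matrix (Fin n) (Fin n) ℝ) : Matrix (Fin n) (Fin n) ℝ :=
  (1 + sMat R B * P)⁻¹ * A

/-- State transition matrix `Φ^{(j:i)}_{A,B}(P)`. -/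
noncomputable def phiMat {n m : ℕ} (R : Matrix (Fin m) (Fin m) ℝ)
    (Q A : Matrix (Fin n) (Fin n) ℝ) (B : Matrix (Fin n) (Fin m) ℝ)
    (P : Matrix (Fin n) (Fin n) ℝ) (j i : ℕ) : Matrix (Fin n) (Fin n) ℝ :=
  ((List.range (i - j)).map (fun k => clMat R A B (ricIter R Q A B (j + k) P))).prod

/-- Perturbed closed loop matrix `𝓛̄(P) = W(P)(H(P) + 𝓛_{A★,B★}(P))`. -/
noncomputable def lbarMat {n m : ℕ} (R : Matrix (Fin m) (Fin m) ℝ)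
    (As : Matrix (Fin n) (Fin n) ℝ) (Bs : Matrix (Fin n) (Fin m) ℝ)
    (Ah : Matrix (Fin n) (Fin n) ℝ) (Bh : Matrix (Fin n) (Fin m) ℝ)
    (P : Matrix (Fin n) (Fin n) ℝ) : Matrix (Fin n) (Fin n) ℝ :=
  (1 + (sMat R Bs - sMat R Bh) * P) *
    ((1 + sMat R Bs * P)⁻¹ * (Ah - As) + clMat R As Bs P)

/-- Perturbed state transition matrix `Φ̄^{(j:i)}(P)`. -/
noncomputable def phibarMat {n m : ℕ} (R : Matrix (Fin m) (Fin m) ℝ)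
    (Q As : Matrix (Fin n) (Fin n) ℝ) (Bs : Matrix (Fin n) (Fin m) ℝ)
    (Ah : Matrix (Fin n) (Fin n) ℝ) (Bh : Matrix (Fin n) (Fin m) ℝ)
    (P : Matrix (Fin n) (Fin n) ℝ) (j i : ℕ) : Matrix (Fin n) (Fin n) ℝ :=
  ((List.range (i - j)).map
    (fun k => lbarMat R As Bs Ah Bh (ricIter R Q As Bs (j + k) P))).prod

/-- The map `𝓜(P₁,P₂)`. -/
noncomputable def mMat {n m : ℕ} (R : Matrix (Fin m) (Fin m) ℝ)
    (As : Matrix (Fin n) (Fin n) ℝ) (Bs : Matrix (Fin n) (Fin m) ℝ)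
    (Ah : Matrix (Fin n) (Fin n) ℝ) (Bh : Matrix (Fin n) (Fin m) ℝ)
    (P1 P2 : Matrix (Fin n) (Fin n) ℝ) : Matrix (Fin n) (Fin n) ℝ :=
  Ahᵀ * P2 * (1 + sMat R Bs * P2)⁻¹ * Ah - Asᵀ * P2 * (1 + sMat R Bs * P2)⁻¹ * As
    + Ahᵀ * (1 + P1 * sMat R Bh)⁻¹ * P2 * (sMat R Bs - sMat R Bh) * P2 *
        (1 + sMat R Bs * P2)⁻¹ * Ah

/-- `β★ = σ_max(P★)/σ_min(Q)`. -/
noncomputable def betaStar {n : ℕ} (Q Pstar : Matrix (Fin n) (Fin n) ℝ) : ℝ :=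
  maxEig Pstar / minEig Q

/-- `ψ(ε_m, ε_p)`. -/
noncomputable def psiF (U b em ep : ℝ) : ℝ :=
  em * (1 + (em + 2 * U) ^ 2 * (b * ep + U))

/-- `γ₁(ε_m, ε_p)`. -/
noncomputable def gamma1F (U b em ep : ℝ) : ℝ :=
  Real.sqrt b * psiF U b em ep + Real.sqrt (1 - b⁻¹)

/-- `α_{ε_m} = (1 − 8‖P★‖² ε_m)^{−1/2}`, with `p = ‖P★‖`. -/
noncomputable def alphaF (p em : ℝ) : ℝ :=
  (1 - 8 * p ^ 2 * em) ^ (-(1 / 2) : ℝ)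

/-- `γ₂(ε_m)`. -/
noncomputable def gamma2F (p b em : ℝ) : ℝ :=
  Real.sqrt (1 - (alphaF p em)⁻¹ * b⁻¹)

/-- `ψ̃(ε_m)`. -/
noncomputable def psitF (U em : ℝ) : ℝ :=
  (em ^ 2 + 2 * U * em) * (U + (em + U) ^ 2 * U ^ 2)

/-- `Ê(ε_m, ε_p, i)`. -/
noncomputable def ehatF (p U b em ep : ℝ) (i : ℕ) : ℝ :=
  Real.sqrt (alphaF p em) * b *
    ((gamma1F U b em ep * gamma2F p b em) ^ i * ep +
      psitF U em * ((1 - (gamma1F U b em ep * gamma2F p b em) ^ i) /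
        (1 - gamma1F U b em ep * gamma2F p b em)))

/-- `g(N, ε_m, ε_p)` with `r = σ_max(R)`, `p = ‖P★‖`, `b = β★`. -/
noncomputable def gF (m : ℕ) (σw r U p b em ep : ℝ) (N : ℕ) : ℝ :=
  128 * (m : ℝ) * σw ^ 2 * (r + U ^ 3) * U ^ 4 * p ^ 2 *
    (em + ehatF p U b em ep (N - 1)) ^ 2

/-- The Lyapunov equation `Σ = (A−BK) Σ (A−BK)ᵀ + σ_w² I`. -/
def LyapEq {n m : ℕ} (As : Matrix (Fin n) (Fin n) ℝ) (Bs : Matrix (Fin n) (Fin m) ℝ)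
    (K : Matrix (Fin m) (Fin n) ℝ) (σw : ℝ) (S : Matrix (Fin n) (Fin n) ℝ) : Prop :=
  S = (As - Bs * K) * S * (As - Bs * K)ᵀ + σw ^ 2 • (1 : Matrix (Fin n) (Fin n) ℝ)

/-- `J_K = tr((Q + Kᵀ R K) Σ)`. -/
noncomputable def lqCost {n m : ℕ} (R : Matrix (Fin m) (Fin m) ℝ)
    (Q : Matrix (Fin n) (Fin n) ℝ) (K : Matrix (Fin m) (Fin n) ℝ)
    (S : Matrix (Fin n) (Fin n) ℝ) : ℝ :=
  ((Q + Kᵀ * R * K) * S).trace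

/-!
With `M̂ = R + B̂ᵀ F B̂` one has
`K - K★ = M̂⁻¹ ((B̂ᵀ F Â - B★ᵀ P★ A★) - (B̂ᵀ F B̂ - B★ᵀ P★ B★) K★)`.
Since `M̂ ⪰ R ⪰ σ_min(R) I`, `‖M̂⁻¹‖ ≤ 1 / σ_min(R)`; each bracket perturbs a triple product and is
at most `Υ★² (3 ε_m + 4 ε)`; and completing the square in the Riccati equation gives
`P★ ⪰ K★ᵀ R K★ ⪰ K★ᵀ K★`, hence `‖K★‖ ≤ √‖P★‖`.
-/

open scoped Matrix.Norms.L2Operator RealInnerProductSpace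

namespace Matrix

variable {k l p q : ℕ}

lemma spNorm_eq_norm (M : Matrix (Fin p) (Fin q) ℝ) : spNorm M = ‖M‖ := rfl

lemma posSemidef_sub_smul_one_iff {M : Matrix (Fin q) (Fin q) ℝ} {c : ℝ} :
    (M - c • 1).PosSemidef ↔ M.IsHermitian ∧ ∀ μ ∈ spectrum ℝ M, c ≤ μ := by
  have hc : (algebraMap ℝ (Matrix (Fin q) (Fin q) ℝ) c).IsHermitian :=
    IsSelfAdjoint.algebraMap _ (IsSelfAdjoint.all c)
  rw [posSemidef_iff_isHermitian_and_spectrum_nonneg, ← Algebra.algebraMap_eq_smul_one,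
    ← spectrum.sub_singleton_eq, Set.sub_singleton, Set.image_subset_iff]
  exact and_congr ⟨fun h => by simpa using h.add hc, fun h => h.sub hc⟩
    (by simp [Set.subset_def])

lemma le_minEig [NeZero q] {M : Matrix (Fin q) (Fin q) ℝ} {c : ℝ} (h : (M - c • 1).PosSemidef) :
    c ≤ minEig M := by
  obtain ⟨hM, hle⟩ := posSemidef_sub_smul_one_iff.1 h
  exact le_csInf ⟨_, hM.eigenvalues_mem_spectrum_real 0⟩ hle

lemma posSemidef_sub_minEig_smul_one {M : Matrix (Fin q) (Fin q) ℝ} (hM : M.IsHermitian) :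
    (M - minEig M • 1).PosSemidef :=
  posSemidef_sub_smul_one_iff.2 ⟨hM, fun _ hμ => csInf_le M.finite_real_spectrum.bddBelow hμ⟩

lemma posDef_of_posSemidef_sub_smul_one {M : Matrix (Fin q) (Fin q) ℝ} {c : ℝ} (hc : 0 < c)
    (h : (M - c • 1).PosSemidef) : M.PosDef := by
  simpa using PosDef.posSemidef_add h (PosDef.one.smul hc)

lemma inner_toEuclideanCLM_le_of_posSemidef_sub {M N : Matrix (Fin q) (Fin q) ℝ}
    (h : (N - M).PosSemidef) (x : EuclideanSpace ℝ (Fin q)) :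
    ⟪x, toEuclideanCLM (𝕜 := ℝ) M x⟫ ≤ ⟪x, toEuclideanCLM (𝕜 := ℝ) N x⟫ := by
  have := h.dotProduct_mulVec_nonneg x.ofLp
  simp only [star_trivial, sub_mulVec, dotProduct_sub, sub_nonneg] at this
  simpa only [inner_toEuclideanCLM] using this

lemma inner_toEuclideanCLM_smul_one (c : ℝ) (x : EuclideanSpace ℝ (Fin q)) :
    ⟪x, toEuclideanCLM (𝕜 := ℝ) (c • 1) x⟫ = c * ‖x‖ ^ 2 := by
  simp [real_inner_smul_right]

lemma norm_inv_le_of_posSemidef_sub_smul_one {M : Matrix (Fin q) (Fin q) ℝ} {c : ℝ} (hc : 0 < c)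
    (h : (M - c • 1).PosSemidef) : ‖M⁻¹‖ ≤ c⁻¹ := by
  have hM : IsUnit M.det :=
    (isUnit_iff_isUnit_det M).1 (posDef_of_posSemidef_sub_smul_one hc h).isUnit
  rw [← l2_opNorm_toEuclideanCLM]
  refine ContinuousLinearMap.opNorm_le_bound _ (inv_nonneg.2 hc.le) fun y => ?_
  let x := toEuclideanCLM (𝕜 := ℝ) M⁻¹ y
  have hx : toEuclideanCLM (𝕜 := ℝ) M x = y := by
    rw [← mul_apply_eq_comp, ← map_mul, mul_nonsing_inv _ hM, map_one]; rfl
  have key : c * ‖x‖ ^ 2 ≤ ‖x‖ * ‖y‖ := calc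
    c * ‖x‖ ^ 2 = ⟪x, toEuclideanCLM (𝕜 := ℝ) (c • 1) x⟫ := (inner_toEuclideanCLM_smul_one c x).symm
    _ ≤ ⟪x, toEuclideanCLM (𝕜 := ℝ) M x⟫ := inner_toEuclideanCLM_le_of_posSemidef_sub h x
    _ = ⟪x, y⟫ := by rw [hx]
    _ ≤ ‖x‖ * ‖y‖ := real_inner_le_norm x y
  rw [inv_mul_eq_div, le_div_iff₀ hc]
  rcases (norm_nonneg x).eq_or_lt with h0 | hpos
  · rw [← h0]; simp
  · nlinarith

lemma norm_le_sqrt_of_posSemidef_sub {K : Matrix (Fin p) (Fin q) ℝ} {P : Matrix (Fin q) (Fin q) ℝ}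
    (h : (P - Kᵀ * K).PosSemidef) : ‖K‖ ≤ √‖P‖ := by
  rw [l2_opNorm_def]
  refine ContinuousLinearMap.opNorm_le_bound _ (Real.sqrt_nonneg _) fun x => ?_
  have hsq : ‖(toEuclideanLin.trans LinearMap.toContinuousLinearMap) K x‖ ^ 2 =
      ⟪x, toEuclideanCLM (𝕜 := ℝ) (Kᵀ * K) x⟫ := by
    rw [← real_inner_self_eq_norm_sq, inner_toEuclideanCLM, ← mulVec_mulVec, dotProduct_mulVec,
      vecMul_transpose]
    rfl
  have hP : ⟪x, toEuclideanCLM (𝕜 := ℝ) P x⟫ ≤ ‖P‖ * ‖x‖ ^ 2 := calc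
    _ ≤ ‖x‖ * ‖toEuclideanCLM (𝕜 := ℝ) P x‖ := real_inner_le_norm _ _
    _ ≤ ‖x‖ * (‖P‖ * ‖x‖) := by gcongr; exact (toEuclideanCLM (𝕜 := ℝ) P).le_opNorm x
    _ = ‖P‖ * ‖x‖ ^ 2 := by ring
  rw [← Real.sqrt_sq (norm_nonneg x), ← Real.sqrt_mul (norm_nonneg P)]
  apply Real.le_sqrt_of_sq_le
  rw [hsq]
  exact (inner_toEuclideanCLM_le_of_posSemidef_sub h x).trans hP

lemma l2_opNorm_transpose (M : Matrix (Fin p) (Fin q) ℝ) : ‖Mᵀ‖ = ‖M‖ := by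
  rw [← conjTranspose_eq_transpose_of_trivial, l2_opNorm_conjTranspose]

lemma norm_mul_mul_sub_mul_mul_le {X X' : Matrix (Fin l) (Fin p) ℝ}
    {Y Y' : Matrix (Fin p) (Fin q) ℝ} {Z Z' : Matrix (Fin q) (Fin k) ℝ} :
    ‖X' * Y' * Z' - X * Y * Z‖ ≤
      ‖X' - X‖ * ‖Y'‖ * ‖Z'‖ + ‖X‖ * ‖Y' - Y‖ * ‖Z'‖ + ‖X‖ * ‖Y‖ * ‖Z' - Z‖ := by
  have hsplit : X' * Y' * Z' - X * Y * Z =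
      (X' - X) * Y' * Z' + X * (Y' - Y) * Z' + X * Y * (Z' - Z) := by
    simp only [Matrix.sub_mul, Matrix.mul_sub]; abel
  have h3 : ∀ {a b c d : ℕ} (E : Matrix (Fin a) (Fin b) ℝ) (F : Matrix (Fin b) (Fin c) ℝ)
      (G : Matrix (Fin c) (Fin d) ℝ), ‖E * F * G‖ ≤ ‖E‖ * ‖F‖ * ‖G‖ := fun E F G =>
    (l2_opNorm_mul _ _).trans (by gcongr; exact l2_opNorm_mul _ _)
  rw [hsplit]
  exact (norm_add₃_le ..).trans (add_le_add_three (h3 ..) (h3 ..) (h3 ..))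

lemma norm_transpose_mul_mul_sub_le {B B' : Matrix (Fin q) (Fin p) ℝ}
    {P P' : Matrix (Fin q) (Fin q) ℝ} {C C' : Matrix (Fin q) (Fin l) ℝ} {U δ ε : ℝ}
    (hB : ‖B‖ ≤ U) (hP : ‖P‖ ≤ U) (hC : ‖C‖ ≤ U)
    (hB' : ‖B' - B‖ ≤ δ) (hP' : ‖P' - P‖ ≤ ε) (hC' : ‖C' - C‖ ≤ δ) (hδ : δ ≤ U) (hε : ε ≤ U) :
    ‖B'ᵀ * P' * C' - Bᵀ * P * C‖ ≤ U ^ 2 * (3 * δ + 4 * ε) := by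
  have hδ0 : 0 ≤ δ := (norm_nonneg _).trans hB'
  have hε0 : 0 ≤ ε := (norm_nonneg _).trans hP'
  have hU0 : 0 ≤ U := hδ0.trans hδ
  have hPn : ‖P'‖ ≤ U + ε := norm_le_norm_add_norm_sub' P' P |>.trans (add_le_add hP hP')
  have hCn : ‖C'‖ ≤ U + δ := norm_le_norm_add_norm_sub' C' C |>.trans (add_le_add hC hC')
  rw [← l2_opNorm_transpose, transpose_sub] at hB'
  rw [← l2_opNorm_transpose] at hB
  refine norm_mul_mul_sub_mul_mul_le.trans ?_
  have h1 : ‖B'ᵀ - Bᵀ‖ * ‖P'‖ * ‖C'‖ ≤ δ * (U + ε) * (U + δ) := by gcongr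
  have h2 : ‖Bᵀ‖ * ‖P' - P‖ * ‖C'‖ ≤ U * ε * (U + δ) := by gcongr
  have h3 : ‖Bᵀ‖ * ‖P‖ * ‖C' - C‖ ≤ U * U * δ := by gcongr
  nlinarith [mul_nonneg (mul_nonneg hδ0 hε0) (sub_nonneg.2 hδ),
    mul_nonneg (mul_nonneg hδ0 hε0) (sub_nonneg.2 hε), mul_nonneg hδ0 (sub_nonneg.2 hδ),
    mul_nonneg hε0 (sub_nonneg.2 hδ), mul_nonneg hδ0 hε0]

end Matrix

section Riccati

variable {n m : ℕ} {R : Matrix (Fin m) (Fin m) ℝ} {Q A P : Matrix (Fin n) (Fin n) ℝ}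
  {B : Matrix (Fin n) (Fin m) ℝ}

lemma isUnit_det_add_transpose_mul_mul (hR : R.PosDef) (hP : P.PosSemidef) :
    IsUnit (R + Bᵀ * P * B).det := by
  have hBPB := hP.conjTranspose_mul_mul_same B
  rw [Matrix.conjTranspose_eq_transpose_of_trivial] at hBPB
  exact (Matrix.isUnit_iff_isUnit_det _).1 (hR.add_posSemidef hBPB).isUnit

lemma inv_one_add_sMat_mul (hR : IsUnit R.det) (hM : IsUnit (R + Bᵀ * P * B).det) :
    (1 + sMat R B * P)⁻¹ = 1 - B * (R + Bᵀ * P * B)⁻¹ * (Bᵀ * P) := by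
  have hRinv : IsUnit R⁻¹ := Matrix.isUnit_nonsing_inv_iff.2 ((Matrix.isUnit_iff_isUnit_det R).2 hR)
  have hmid : R⁻¹⁻¹ + Bᵀ * P * (1 : Matrix (Fin n) (Fin n) ℝ)⁻¹ * B = R + Bᵀ * P * B := by
    rw [Matrix.nonsing_inv_nonsing_inv _ hR, inv_one, Matrix.mul_one]
  have := Matrix.add_mul_mul_inv_eq_sub 1 B R⁻¹ (Bᵀ * P) isUnit_one hRinv
    (by rw [hmid]; exact (Matrix.isUnit_iff_isUnit_det _).2 hM)
  rw [hmid] at this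
  simpa [sMat, Matrix.mul_assoc] using this

lemma gain_spec (hM : IsUnit (R + Bᵀ * P * B).det) :
    (R + Bᵀ * P * B) * gain R A B P = Bᵀ * P * A := by
  rw [gain, ← Matrix.mul_assoc, Matrix.mul_nonsing_inv _ hM, Matrix.one_mul]

lemma completed_square {K : Matrix (Fin m) (Fin n) ℝ}
    (hK : (R + Bᵀ * P * B) * K = Bᵀ * P * A) :
    (A - B * K)ᵀ * P * (A - B * K) + Kᵀ * R * K = Aᵀ * P * A - Aᵀ * P * B * K := by
  have hKK : Kᵀ * (Bᵀ * P * A) = Kᵀ * (R + Bᵀ * P * B) * K := by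
    rw [← hK, ← Matrix.mul_assoc]
  simp only [Matrix.transpose_sub, Matrix.transpose_mul, Matrix.sub_mul, Matrix.mul_sub,
    Matrix.add_mul, Matrix.mul_add, Matrix.mul_assoc] at hKK ⊢
  rw [hKK]
  abel

lemma mul_inv_one_add_sMat_mul_mul_eq (hR : IsUnit R.det) (hM : IsUnit (R + Bᵀ * P * B).det) :
    Aᵀ * P * (1 + sMat R B * P)⁻¹ * A =
      (A - B * gain R A B P)ᵀ * P * (A - B * gain R A B P) +
        (gain R A B P)ᵀ * R * gain R A B P := by
  rw [completed_square (gain_spec hM), inv_one_add_sMat_mul hR hM, gain]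
  simp only [Matrix.mul_sub, Matrix.sub_mul, Matrix.mul_one, Matrix.mul_assoc]

lemma posSemidef_sub_gain_of_eq_ric (hR : R.PosDef) (hQ : Q.PosSemidef) (hP : P.PosSemidef)
    (hfix : P = ric R Q A B P) : (P - (gain R A B P)ᵀ * R * gain R A B P).PosSemidef := by
  have hM := isUnit_det_add_transpose_mul_mul (B := B) hR hP
  have hcl := hP.conjTranspose_mul_mul_same (A - B * gain R A B P)
  rw [Matrix.conjTranspose_eq_transpose_of_trivial] at hcl
  have : P - (gain R A B P)ᵀ * R * gain R A B P =
      (A - B * gain R A B P)ᵀ * P * (A - B * gain R A B P) + Q := by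
    nth_rewrite 1 [hfix]
    rw [ric, mul_inv_one_add_sMat_mul_mul_eq ((Matrix.isUnit_iff_isUnit_det R).1 hR.isUnit) hM]
    abel
  rw [this]
  exact hcl.add hQ

lemma norm_gain_le_sqrt (hR : (R - 1).PosSemidef) (hQ : Q.PosSemidef) (hP : P.PosSemidef)
    (hfix : P = ric R Q A B P) : ‖gain R A B P‖ ≤ √‖P‖ := by
  have hRpd : R.PosDef := Matrix.posDef_of_posSemidef_sub_smul_one one_pos (by rwa [one_smul])
  have hRK := hR.conjTranspose_mul_mul_same (gain R A B P)
  rw [Matrix.conjTranspose_eq_transpose_of_trivial] at hRK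
  apply Matrix.norm_le_sqrt_of_posSemidef_sub
  have : P - (gain R A B P)ᵀ * gain R A B P = (P - (gain R A B P)ᵀ * R * gain R A B P) +
      (gain R A B P)ᵀ * (R - 1) * gain R A B P := by
    simp only [Matrix.mul_sub, Matrix.sub_mul, Matrix.mul_one]; abel
  rw [this]
  exact (posSemidef_sub_gain_of_eq_ric hRpd hQ hP hfix).add hRK

lemma gain_sub_gain {A' F : Matrix (Fin n) (Fin n) ℝ} {B' : Matrix (Fin n) (Fin m) ℝ}
    (hM' : IsUnit (R + B'ᵀ * F * B').det) (hM : IsUnit (R + Bᵀ * P * B).det) :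
    gain R A' B' F - gain R A B P = (R + B'ᵀ * F * B')⁻¹ *
      ((B'ᵀ * F * A' - Bᵀ * P * A) - (B'ᵀ * F * B' - Bᵀ * P * B) * gain R A B P) := by
  have : (B'ᵀ * F * A' - Bᵀ * P * A) - (B'ᵀ * F * B' - Bᵀ * P * B) * gain R A B P =
      B'ᵀ * F * A' - (R + B'ᵀ * F * B') * gain R A B P := by
    rw [← gain_spec hM]
    simp only [Matrix.sub_mul, Matrix.add_mul]
    abel
  rw [this, Matrix.mul_sub, ← Matrix.mul_assoc _ _ (gain R A B P), Matrix.nonsing_inv_mul _ hM',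
    Matrix.one_mul, gain]

end Riccati

theorem stmt4_general {n m : ℕ} (hm : 0 < m)
    (Astar Ahat : Matrix (Fin n) (Fin n) ℝ) (Bstar Bhat : Matrix (Fin n) (Fin m) ℝ)
    (R : Matrix (Fin m) (Fin m) ℝ) (Q Pstar F : Matrix (Fin n) (Fin n) ℝ)
    (U εm ε : ℝ)
    (hR : (R - 1).PosSemidef) (hQ : (Q - 1).PosSemidef)
    (hUem : εm ≤ U)
    (hAb : spNorm Astar ≤ U) (hBb : spNorm Bstar ≤ U) (hPb : spNorm Pstar ≤ U)
    (hPstar : Pstar.PosDef) (hfix : Pstar = ric R Q Astar Bstar Pstar)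
    (hAm : spNorm (Ahat - Astar) ≤ εm) (hBm : spNorm (Bhat - Bstar) ≤ εm)
    (hF : F.PosSemidef) (hFP : spNorm (F - Pstar) ≤ ε)
    (hUε : ε ≤ U) :
    spNorm (gain R Ahat Bhat F - gain R Astar Bstar Pstar) ≤
      U ^ 2 * (Real.sqrt (spNorm Pstar) + 1) * (3 * εm + 4 * ε) / minEig R := by
  have : NeZero m := ⟨hm.ne'⟩
  simp only [spNorm_eq_norm] at *
  have hR1 : (R - (1 : ℝ) • 1).PosSemidef := by rwa [one_smul]
  have hRpd : R.PosDef := posDef_of_posSemidef_sub_smul_one one_pos hR1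
  have hc : 0 < minEig R := one_pos.trans_le (le_minEig hR1)
  have hPpsd := hPstar.posSemidef
  have hMinv : ‖(R + Bhatᵀ * F * Bhat)⁻¹‖ ≤ (minEig R)⁻¹ := by
    refine norm_inv_le_of_posSemidef_sub_smul_one hc ?_
    have hBFB := hF.conjTranspose_mul_mul_same Bhat
    rw [conjTranspose_eq_transpose_of_trivial] at hBFB
    simpa only [sub_add_eq_add_sub] using
      (posSemidef_sub_minEig_smul_one (posSemidef_sub_smul_one_iff.1 hR1).1).add hBFB
  have hK := norm_gain_le_sqrt hR (by simpa using hQ.add PosSemidef.one) hPpsd hfix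
  have hEA := norm_transpose_mul_mul_sub_le hBb hPb hAb hBm hFP hAm hUem hUε
  have hEB := norm_transpose_mul_mul_sub_le hBb hPb hBb hBm hFP hBm hUem hUε
  have hE0 := (norm_nonneg _).trans hEB
  rw [gain_sub_gain (isUnit_det_add_transpose_mul_mul hRpd hF)
    (isUnit_det_add_transpose_mul_mul hRpd hPpsd)]
  calc _ ≤ ‖(R + Bhatᵀ * F * Bhat)⁻¹‖ * (‖Bhatᵀ * F * Ahat - Bstarᵀ * Pstar * Astar‖ +
        ‖Bhatᵀ * F * Bhat - Bstarᵀ * Pstar * Bstar‖ * ‖gain R Astar Bstar Pstar‖) :=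
        (l2_opNorm_mul _ _).trans <| by
          gcongr; exact (norm_sub_le _ _).trans (by gcongr; exact l2_opNorm_mul _ _)
    _ ≤ (minEig R)⁻¹ * (U ^ 2 * (3 * εm + 4 * ε) + U ^ 2 * (3 * εm + 4 * ε) * √‖Pstar‖) := by
        gcongr
    _ = _ := by ring

theorem stmt4 {n m : ℕ} (hn : 0 < n) (hm : 0 < m) (hmn : m ≤ n)
    (Astar Ahat : Matrix (Fin n) (Fin n) ℝ) (Bstar Bhat : Matrix (Fin n) (Fin m) ℝ)
    (R : Matrix (Fin m) (Fin m) ℝ) (Q Pstar F : Matrix (Fin n) (Fin n) ℝ)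
    (U εm ε : ℝ)
    (hR : (R - 1).PosSemidef) (hQ : (Q - 1).PosSemidef)
    (hstab : Stabilizable Astar Bstar)
    (hU1 : 1 ≤ U) (hUem : εm ≤ U)
    (hAb : spNorm Astar ≤ U) (hBb : spNorm Bstar ≤ U) (hPb : spNorm Pstar ≤ U)
    (hPstar : Pstar.PosDef) (hfix : Pstar = ric R Q Astar Bstar Pstar)
    (hεm : 0 ≤ εm) (hAm : spNorm (Ahat - Astar) ≤ εm) (hBm : spNorm (Bhat - Bstar) ≤ εm)
    (hF : F.PosSemidef) (hε : 0 ≤ ε) (hFP : spNorm (F - Pstar) ≤ ε)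
    (hUε : ε ≤ U) :
    spNorm (gain R Ahat Bhat F - gain R Astar Bstar Pstar) ≤
      U ^ 2 * (Real.sqrt (spNorm Pstar) + 1) * (3 * εm + 4 * ε) / minEig R :=
  stmt4_general hm Astar Ahat Bstar Bhat R Q Pstar F U εm ε hR hQ hUem hAb hBb hPb hPstar hfix hAm
    hBm hF hFP hUε
end

section
/- Let R ≻ 0 and Q ⪰ 0, let (A★,B★) and (Â,B̂) be arbitrary pairs in ℝ^{n×n} × ℝ^{n×m}, and let P₁, P₂ ⪰ 0. For each integer i ≥ 0, set P̂_{(i)} := 𝓡^{(i)}_{Â,B̂}(P₁) and P_{(i)} := 𝓡^{(i)}_{A★,B★}(P₂). Then for every integer i ≥ 0: P̂_{(i)} − P_{(i)} = [Φ^{(0:i)}_{Â,B̂}(P₁)]ᵀ (P₁ − P₂) Φ̄^{(0:i)}(P₂) + Σ_{j=1}^{i} [Φ^{(i−j+1:i)}_{Â,B̂}(P₁)]ᵀ 𝓜(P̂_{(i−j)}, P_{(i−j)}) Φ̄^{(i−j+1:i)}(P₂). -/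
open Matrix

/-!
Both Riccati maps preserve positive semidefiniteness, so along the two trajectories every
`I + S P` is invertible. With `S = S_{B★}` and `T = S_{B̂}`, one Riccati step then satisfies
`𝓡_{Â,B̂}(X) - 𝓡_{A★,B★}(Y) = 𝓛_{Â,B̂}(X)ᵀ (X - Y) 𝓛̄(Y) + 𝓜(X, Y)`:
this follows from the push-through identity `X (I + T X)⁻¹ = (I + X T)⁻¹ X` and the ring identity
`X (I + S Y) = (X - Y)(I + (S - T) Y) + (I + X T) Y + Y (S - T) Y`. Unrolling this two-sided
linear recursion for the differences gives the formula.
-/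

-- `phiMat R Q A B P` and `phibarMat R Q As Bs Ah Bh P` are definitionally `stateTransition` of the
-- closed-loop matrices `𝓛` and `𝓛̄` along the Riccati trajectory.
def stateTransition {M : Type*} [Monoid M] (L : ℕ → M) (j i : ℕ) : M :=
  ((List.range (i - j)).map fun k => L (j + k)).prod

section StateTransition

variable {M : Type*} [Monoid M] (L : ℕ → M)

@[simp]
lemma stateTransition_self (i : ℕ) : stateTransition L i i = 1 := by
  simp [stateTransition]

lemma stateTransition_succ {j i : ℕ} (h : j ≤ i) :
    stateTransition L j (i + 1) = stateTransition L j i * L i := by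
  rw [stateTransition, show i + 1 - j = i - j + 1 by omega, List.range_succ, List.map_append,
    List.prod_append, List.map_singleton, List.prod_singleton, Nat.add_sub_cancel' h]
  rfl

end StateTransition

lemma Finset.sum_Icc_one_sub_eq_sum_range {M : Type*} [AddCommMonoid M] (f : ℕ → M) (i : ℕ) :
    ∑ j ∈ Icc 1 i, f (i - j) = ∑ k ∈ range i, f k := by
  refine sum_nbij' (fun j => i - j) (fun k => i - k) ?_ ?_ ?_ ?_ fun _ _ => rfl <;>
    · intro j hj
      simp only [mem_Icc, mem_range] at hj ⊢
      omega

namespace Matrix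

section VariationOfConstants

variable {ι α : Type*} [Fintype ι] [DecidableEq ι] [CommSemiring α]
  {L Lbar M D : ℕ → Matrix ι ι α}

lemma variation_of_constants_range (hD : ∀ k, D (k + 1) = (L k)ᵀ * D k * Lbar k + M k)
    (i : ℕ) :
    D i = (stateTransition L 0 i)ᵀ * D 0 * stateTransition Lbar 0 i +
      ∑ k ∈ Finset.range i,
        (stateTransition L (k + 1) i)ᵀ * M k * stateTransition Lbar (k + 1) i := by
  induction i with
  | zero => simp
  | succ i ih =>
    have hsum : ∀ k ∈ Finset.range i,
        (L i)ᵀ * ((stateTransition L (k + 1) i)ᵀ * M k * stateTransition Lbar (k + 1) i) *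
            Lbar i =
          (stateTransition L (k + 1) (i + 1))ᵀ * M k * stateTransition Lbar (k + 1) (i + 1) := by
      intro k hk
      have hki : k + 1 ≤ i := Finset.mem_range.mp hk
      simp only [stateTransition_succ _ hki, transpose_mul, Matrix.mul_assoc]
    rw [hD, ih, Matrix.mul_add, Matrix.add_mul, Finset.mul_sum, Finset.sum_mul,
      Finset.sum_congr rfl hsum, Finset.sum_range_succ, stateTransition_succ _ i.zero_le,
      stateTransition_succ _ i.zero_le, stateTransition_self, stateTransition_self]
    simp only [transpose_mul, transpose_one, Matrix.one_mul, Matrix.mul_one, Matrix.mul_assoc,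
      add_assoc]

lemma variation_of_constants (hD : ∀ k, D (k + 1) = (L k)ᵀ * D k * Lbar k + M k) (i : ℕ) :
    D i = (stateTransition L 0 i)ᵀ * D 0 * stateTransition Lbar 0 i +
      ∑ j ∈ Finset.Icc 1 i,
        (stateTransition L (i - j + 1) i)ᵀ * M (i - j) * stateTransition Lbar (i - j + 1) i := by
  rw [Finset.sum_Icc_one_sub_eq_sum_range
    (fun k => (stateTransition L (k + 1) i)ᵀ * M k * stateTransition Lbar (k + 1) i)]
  exact variation_of_constants_range hD i

end VariationOfConstants

section PushThrough

variable {ι α : Type*} [Fintype ι] [DecidableEq ι] [CommRing α]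

lemma mul_inv_one_add_mul_comm {X T : Matrix ι ι α} (h : IsUnit (1 + X * T).det) :
    X * (1 + T * X)⁻¹ = (1 + X * T)⁻¹ * X := by
  have h' : IsUnit (1 + T * X).det := by rwa [det_one_add_mul_comm]
  calc X * (1 + T * X)⁻¹ = (1 + X * T)⁻¹ * ((1 + X * T) * X) * (1 + T * X)⁻¹ := by
        rw [nonsing_inv_mul_cancel_left _ _ h]
    _ = (1 + X * T)⁻¹ * (X * (1 + T * X)) * (1 + T * X)⁻¹ := by noncomm_ring
    _ = (1 + X * T)⁻¹ * X := by rw [← Matrix.mul_assoc, mul_nonsing_inv_cancel_right _ _ h']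

end PushThrough

namespace PosSemidef

variable {ι : Type*} [Fintype ι] [DecidableEq ι] {S P : Matrix ι ι ℝ}

lemma isUnit_det_one_add_mul (hS : S.PosSemidef) (hP : P.PosSemidef) :
    IsUnit (1 + S * P).det := by
  rw [isUnit_iff_ne_zero]
  intro hdet
  obtain ⟨v, hv0, hv⟩ := exists_mulVec_eq_zero_iff.mpr hdet
  have hv' : v + S *ᵥ (P *ᵥ v) = 0 := by
    simpa only [add_mulVec, one_mulVec, mulVec_mulVec] using hv
  -- pairing `v + S P v = 0` with `P v` gives a sum of two nonnegative quadratic forms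
  have hsum : v ⬝ᵥ (P *ᵥ v) + (P *ᵥ v) ⬝ᵥ (S *ᵥ (P *ᵥ v)) = 0 := by
    simpa [dotProduct_add, dotProduct_comm (P *ᵥ v) v] using congrArg ((P *ᵥ v) ⬝ᵥ ·) hv'
  have hPv_form : v ⬝ᵥ (P *ᵥ v) = 0 := by
    have h1 : 0 ≤ v ⬝ᵥ (P *ᵥ v) := by simpa using hP.dotProduct_mulVec_nonneg v
    have h2 : 0 ≤ (P *ᵥ v) ⬝ᵥ (S *ᵥ (P *ᵥ v)) := by
      simpa using hS.dotProduct_mulVec_nonneg (P *ᵥ v)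
    linarith
  have hPv : P *ᵥ v = 0 := (hP.dotProduct_mulVec_zero_iff v).mp (by simpa using hPv_form)
  exact hv0 (by simpa [hPv] using hv')

lemma mul_inv_one_add_mul (hS : S.PosSemidef) (hP : P.PosSemidef) :
    (P * (1 + S * P)⁻¹).PosSemidef := by
  have hSP := hS.isUnit_det_one_add_mul hP
  refine posSemidef_iff_dotProduct_mulVec.mpr ⟨?_, fun x => ?_⟩
  · change (P * (1 + S * P)⁻¹)ᴴ = _
    rw [conjTranspose_mul, conjTranspose_nonsing_inv, conjTranspose_add, conjTranspose_mul,
      hP.1, hS.1, conjTranspose_one, ← mul_inv_one_add_mul_comm (hP.isUnit_det_one_add_mul hS)]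
  · set y := (1 + S * P)⁻¹ *ᵥ x
    have hx : x = y + S *ᵥ (P *ᵥ y) := by
      have hy : (1 + S * P) *ᵥ y = x := by
        rw [mulVec_mulVec, mul_nonsing_inv _ hSP, one_mulVec]
      rw [← hy, add_mulVec, one_mulVec, ← mulVec_mulVec]
    have h1 := hP.dotProduct_mulVec_nonneg y
    have h2 := hS.dotProduct_mulVec_nonneg (P *ᵥ y)
    simp only [star_trivial] at h1 h2 ⊢
    calc (0 : ℝ) ≤ y ⬝ᵥ (P *ᵥ y) + (P *ᵥ y) ⬝ᵥ (S *ᵥ (P *ᵥ y)) := by linarith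
      _ = (y + S *ᵥ (P *ᵥ y)) ⬝ᵥ (P *ᵥ y) := by
        rw [add_dotProduct, dotProduct_comm (S *ᵥ (P *ᵥ y))]
      _ = x ⬝ᵥ ((P * (1 + S * P)⁻¹) *ᵥ x) := by rw [← hx, ← mulVec_mulVec]

end PosSemidef

end Matrix

lemma resolvent_identity {A : Type*} [Ring A] {U V X Y S T : A}
    (hU : U * (1 + X * T) = 1) (hV : (1 + S * Y) * V = 1) :
    U * X = U * (X - Y) * ((1 + (S - T) * Y) * V) + Y * V + U * (Y * (S - T) * Y) * V := by
  have key : X * (1 + S * Y) = (X - Y) * (1 + (S - T) * Y) + (1 + X * T) * Y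
      + Y * (S - T) * Y := by noncomm_ring
  calc U * X = U * (X * (1 + S * Y)) * V := by rw [mul_assoc U, mul_assoc X, hV, mul_one]
    _ = U * (X - Y) * ((1 + (S - T) * Y) * V) + U * (1 + X * T) * (Y * V)
        + U * (Y * (S - T) * Y) * V := by rw [key]; noncomm_ring
    _ = _ := by rw [hU, one_mul]

section Riccati

variable {n m : ℕ} {R : Matrix (Fin m) (Fin m) ℝ} {Q : Matrix (Fin n) (Fin n) ℝ}

lemma sMat_posSemidef (hR : R.PosDef) (B : Matrix (Fin n) (Fin m) ℝ) :
    (sMat R B).PosSemidef := by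
  simpa [sMat, conjTranspose_eq_transpose_of_trivial] using
    hR.inv.posSemidef.mul_mul_conjTranspose_same B

lemma ric_posSemidef {A : Matrix (Fin n) (Fin n) ℝ} {B : Matrix (Fin n) (Fin m) ℝ}
    {P : Matrix (Fin n) (Fin n) ℝ} (hR : R.PosDef) (hQ : Q.PosSemidef) (hP : P.PosSemidef) :
    (ric R Q A B P).PosSemidef := by
  have h := ((sMat_posSemidef hR B).mul_inv_one_add_mul hP).conjTranspose_mul_mul_same A
  rw [conjTranspose_eq_transpose_of_trivial, ← Matrix.mul_assoc] at h
  exact h.add hQ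

lemma ricIter_posSemidef {A : Matrix (Fin n) (Fin n) ℝ} {B : Matrix (Fin n) (Fin m) ℝ}
    {P : Matrix (Fin n) (Fin n) ℝ} (hR : R.PosDef) (hQ : Q.PosSemidef) (hP : P.PosSemidef)
    (i : ℕ) : (ricIter R Q A B i P).PosSemidef := by
  induction i with
  | zero => exact hP
  | succ i ih => exact ric_posSemidef hR hQ ih

lemma ric_sub_ric {As Ah X Y : Matrix (Fin n) (Fin n) ℝ} {Bs Bh : Matrix (Fin n) (Fin m) ℝ}
    (hR : R.PosDef) (hX : X.PosSemidef) (hY : Y.PosSemidef) :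
    ric R Q Ah Bh X - ric R Q As Bs Y =
      (clMat R Ah Bh X)ᵀ * (X - Y) * lbarMat R As Bs Ah Bh Y + mMat R As Bs Ah Bh X Y := by
  have hS := sMat_posSemidef hR Bs
  have hT := sMat_posSemidef hR Bh
  set S := sMat R Bs
  set T := sMat R Bh
  have hXT := hX.isUnit_det_one_add_mul hT
  have hSY := hS.isUnit_det_one_add_mul hY
  have hcl : (clMat R Ah Bh X)ᵀ = Ahᵀ * (1 + X * T)⁻¹ := by
    rw [clMat, transpose_mul, transpose_nonsing_inv, transpose_add, transpose_mul,
      (isHermitian_iff_isSymm.mp hX.1).eq, (isHermitian_iff_isSymm.mp hT.1).eq, transpose_one]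
  have hlbar : lbarMat R As Bs Ah Bh Y = (1 + (S - T) * Y) * ((1 + S * Y)⁻¹ * Ah) := by
    rw [lbarMat, clMat, ← Matrix.mul_add, sub_add_cancel]
  have hric : ric R Q Ah Bh X = Ahᵀ * ((1 + X * T)⁻¹ * X) * Ah + Q := by
    rw [ric, ← mul_inv_one_add_mul_comm hXT, Matrix.mul_assoc Ahᵀ]
  rw [hcl, hlbar, hric, resolvent_identity (nonsing_inv_mul _ hXT) (mul_nonsing_inv _ hSY), ric,
    mMat]
  noncomm_ring

end Riccati

theorem stmt6_general {n m : ℕ}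
    (Astar Ahat : Matrix (Fin n) (Fin n) ℝ) (Bstar Bhat : Matrix (Fin n) (Fin m) ℝ)
    (R : Matrix (Fin m) (Fin m) ℝ) (Q P1 P2 : Matrix (Fin n) (Fin n) ℝ)
    (hR : R.PosDef) (hQ : Q.PosSemidef)
    (hP1 : P1.PosSemidef) (hP2 : P2.PosSemidef) :
    ∀ i : ℕ,
      ricIter R Q Ahat Bhat i P1 - ricIter R Q Astar Bstar i P2 =
        (phiMat R Q Ahat Bhat P1 0 i)ᵀ * (P1 - P2) *
            phibarMat R Q Astar Bstar Ahat Bhat P2 0 i +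
          ∑ j ∈ Finset.Icc 1 i,
            (phiMat R Q Ahat Bhat P1 (i - j + 1) i)ᵀ *
              mMat R Astar Bstar Ahat Bhat (ricIter R Q Ahat Bhat (i - j) P1)
                (ricIter R Q Astar Bstar (i - j) P2) *
              phibarMat R Q Astar Bstar Ahat Bhat P2 (i - j + 1) i :=
by
  intro i
  have h := Matrix.variation_of_constants
    (D := fun k => ricIter R Q Ahat Bhat k P1 - ricIter R Q Astar Bstar k P2)
    (fun k => ric_sub_ric hR (ricIter_posSemidef hR hQ hP1 k) (ricIter_posSemidef hR hQ hP2 k)) i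
  exact h

theorem stmt6 {n m : ℕ} (hn : 0 < n) (hm : 0 < m)
    (Astar Ahat : Matrix (Fin n) (Fin n) ℝ) (Bstar Bhat : Matrix (Fin n) (Fin m) ℝ)
    (R : Matrix (Fin m) (Fin m) ℝ) (Q P1 P2 : Matrix (Fin n) (Fin n) ℝ)
    (hR : R.PosDef) (hQ : Q.PosSemidef)
    (hP1 : P1.PosSemidef) (hP2 : P2.PosSemidef) :
    ∀ i : ℕ,
      ricIter R Q Ahat Bhat i P1 - ricIter R Q Astar Bstar i P2 =
        (phiMat R Q Ahat Bhat P1 0 i)ᵀ * (P1 - P2) *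
            phibarMat R Q Astar Bstar Ahat Bhat P2 0 i +
          ∑ j ∈ Finset.Icc 1 i,
            (phiMat R Q Ahat Bhat P1 (i - j + 1) i)ᵀ *
              mMat R Astar Bstar Ahat Bhat (ricIter R Q Ahat Bhat (i - j) P1)
                (ricIter R Q Astar Bstar (i - j) P2) *
              phibarMat R Q Astar Bstar Ahat Bhat P2 (i - j + 1) i :=
  stmt6_general Astar Ahat Bstar Bhat R Q P1 P2 hR hQ hP1 hP2
end
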